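/- Let f(z) = λe^z with λ ≠ 0 and t > 1/2. Then the spherical transfer operator applied to the constant function 1 satisfies L_t 1(w) → +∞ as |w| → ∞. In particular, L_t is not a bounded operator on bounded continuous functions. More precisely, for large |w|, L_t 1(w) ≍ |w|^t · (1 + (log|w/λ|)²)^{1/2 - t}. -/

import Mathlib

/-!
The preimages of `w` under `z ↦ l e^z` are `log (w / l) + 2πin`, `n ∈ ℤ`, so the sum over them is
the lattice sum `∑ₙ (A + (y₀ + 2πn)²)^(-t)` with `A = 1 + log² |w / l|` and `|y₀| ≤ π`. About `√A`
of its terms are of size `A^(-t)` and the remaining ones form a tail dominated by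
`∫_{√A}^∞ x^(-2t) dx`, so the lattice sum is `≍ A^(1/2 - t)`. The prefactor `((1 + |w|²)/|w|)^t`
is `≍ |w|^t`. Finally `1 + log² |w / l| ≤ |w|` for large `|w|`, so
`|w|^t (1 + log² |w / l|)^(1/2 - t) ≥ |w|^(1/2) → ∞`.
-/

open Filter Real

lemma sum_range_rpow_neg_le {x q : ℝ} (hx : 0 < x) (hq : 1 < q) (N : ℕ) :
    ∑ i ∈ Finset.range N, (x + ↑(i + 1)) ^ (-q) ≤ x ^ (1 - q) / (q - 1) := by
  have hanti : AntitoneOn (fun y : ℝ => y ^ (-q)) (Set.Icc x (x + N)) :=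
    fun a ha b _ hab => rpow_le_rpow_of_nonpos (hx.trans_le ha.1) hab (by linarith)
  have hzero : (0 : ℝ) ∉ Set.uIcc x (x + N) := by
    rw [Set.uIcc_of_le (le_add_of_nonneg_right N.cast_nonneg)]
    exact fun h => hx.not_ge h.1
  refine hanti.sum_le_integral.trans ?_
  rw [integral_rpow (Or.inr ⟨by linarith, hzero⟩), show -q + 1 = 1 - q by ring,
    ← neg_div_neg_eq, neg_sub, neg_sub]
  gcongr
  exact sub_le_self _ (by positivity)

lemma summable_and_tsum_add_nat_rpow_neg_le {x q : ℝ} (hx : 0 < x) (hq : 1 < q) :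
    Summable (fun n : ℕ => (x + n) ^ (-q)) ∧
      ∑' n : ℕ, (x + n) ^ (-q) ≤ x ^ (-q) + x ^ (1 - q) / (q - 1) := by
  have hnonneg : ∀ n : ℕ, 0 ≤ (x + ↑(n + 1)) ^ (-q) := fun n => by positivity
  have htail := summable_of_sum_range_le hnonneg (sum_range_rpow_neg_le hx hq)
  have hsum : Summable (fun n : ℕ => (x + n) ^ (-q)) := (summable_nat_add_iff 1).mp htail
  refine ⟨hsum, ?_⟩
  rw [hsum.tsum_eq_zero_add, Nat.cast_zero, add_zero]
  gcongr
  exact Real.tsum_le_of_sum_range_le hnonneg (sum_range_rpow_neg_le hx hq)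

lemma sq_intCast_le_sq_add_two_pi_mul {y : ℝ} (hy : |y| ≤ π) (n : ℤ) :
    (n : ℝ) ^ 2 ≤ (y + 2 * π * n) ^ 2 := by
  rcases eq_or_ne n 0 with rfl | hn
  · simp [sq_nonneg]
  have h1 : (1 : ℝ) ≤ |(n : ℝ)| := by exact_mod_cast Int.one_le_abs hn
  have h2 : |2 * π * (n : ℝ)| ≤ |y + 2 * π * n| + |y| := by
    simpa using abs_sub (y + 2 * π * n) y
  rw [abs_mul, abs_of_pos (by positivity : (0 : ℝ) < 2 * π)] at h2
  apply sq_le_sq.mpr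
  nlinarith [pi_gt_three]

lemma rpow_neg_lattice_le {A y t : ℝ} (hA : 0 < A) (ht : 0 ≤ t) (hy : |y| ≤ π) (n : ℤ) :
    (A + (y + 2 * π * n) ^ 2) ^ (-t) ≤ 2 ^ t * (√A + |(n : ℝ)|) ^ (-(2 * t)) := by
  have hpos : 0 < √A + |(n : ℝ)| := by positivity
  have hsq : (√A + |(n : ℝ)|) ^ 2 / 2 ≤ A + (y + 2 * π * n) ^ 2 := by
    have := sq_intCast_le_sq_add_two_pi_mul hy n
    nlinarith [sq_sqrt hA.le, sq_abs (n : ℝ), sq_nonneg (√A - |(n : ℝ)|)]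
  calc (A + (y + 2 * π * n) ^ 2) ^ (-t) ≤ ((√A + |(n : ℝ)|) ^ 2 / 2) ^ (-t) :=
        rpow_le_rpow_of_nonpos (by positivity) hsq (by linarith)
    _ = 2 ^ t * (√A + |(n : ℝ)|) ^ (-(2 * t)) := by
        rw [div_rpow (by positivity) zero_le_two, ← rpow_natCast, ← rpow_mul hpos.le,
          rpow_neg zero_le_two, div_inv_eq_mul, mul_comm]
        push_cast
        ring_nf

lemma sqrt_rpow_eq {A : ℝ} (hA : 0 ≤ A) (r : ℝ) : √A ^ r = A ^ (r / 2) := by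
  rw [sqrt_eq_rpow, ← rpow_mul hA]; ring_nf

lemma summable_and_tsum_lattice_le {A y t : ℝ} (hA : 1 ≤ A) (ht : 1 / 2 < t) (hy : |y| ≤ π) :
    Summable (fun n : ℤ => (A + (y + 2 * π * n) ^ 2) ^ (-t)) ∧
      ∑' n : ℤ, (A + (y + 2 * π * n) ^ 2) ^ (-t) ≤
        2 ^ (t + 1) * (1 + 1 / (2 * t - 1)) * A ^ (1 / 2 - t) := by
  set g : ℤ → ℝ := fun n => (A + (y + 2 * π * n) ^ 2) ^ (-t)
  set s := √A
  have hs : 1 ≤ s := one_le_sqrt.mpr hA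
  set h : ℕ → ℝ := fun n => (s + n) ^ (-(2 * t))
  obtain ⟨hh, hh_le⟩ := summable_and_tsum_add_nat_rpow_neg_le (x := s) (q := 2 * t)
    (by linarith) (by linarith)
  have hg_nonneg : ∀ n, 0 ≤ g n := fun n => by positivity
  have hA0 : 0 < A := by linarith
  have ht0 : 0 ≤ t := by linarith
  have hg_pos : ∀ n : ℕ, g n ≤ 2 ^ t * h n := fun n => by
    have := rpow_neg_lattice_le hA0 ht0 hy n
    simpa [g, h] using this
  have hg_neg : ∀ n : ℕ, g (-(n + 1)) ≤ 2 ^ t * h n := fun n => by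
    refine (rpow_neg_lattice_le hA0 ht0 hy _).trans ?_
    have habs : |((-(n + 1 : ℤ) : ℤ) : ℝ)| = n + 1 := by
      push_cast; rw [abs_neg, abs_of_nonneg (by positivity)]
    rw [habs]
    exact mul_le_mul_of_nonneg_left
      (rpow_le_rpow_of_nonpos (by positivity) (by linarith) (by linarith)) (by positivity)
  have hpos := (hh.mul_left (2 ^ t)).of_nonneg_of_le (fun n => hg_nonneg _) hg_pos
  have hneg := (hh.mul_left (2 ^ t)).of_nonneg_of_le (fun n => hg_nonneg _) hg_neg
  refine ⟨hpos.of_nat_of_neg_add_one hneg, ?_⟩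
  have hs_pow : s ^ (-(2 * t)) ≤ s ^ (1 - 2 * t) := rpow_le_rpow_of_exponent_le hs (by linarith)
  calc ∑' n : ℤ, g n = ∑' n : ℕ, g n + ∑' n : ℕ, g (-(n + 1)) :=
        tsum_of_nat_of_neg_add_one hpos hneg
    _ ≤ ∑' n : ℕ, 2 ^ t * h n + ∑' n : ℕ, 2 ^ t * h n :=
        add_le_add (hpos.tsum_le_tsum hg_pos (hh.mul_left _))
          (hneg.tsum_le_tsum hg_neg (hh.mul_left _))
    _ = 2 ^ (t + 1) * ∑' n : ℕ, h n := by
        rw [tsum_mul_left, rpow_add_one two_ne_zero]; ring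
    _ ≤ 2 ^ (t + 1) * (s ^ (1 - 2 * t) + s ^ (1 - 2 * t) / (2 * t - 1)) := by
        gcongr
        exact hh_le.trans (by gcongr)
    _ = 2 ^ (t + 1) * (1 + 1 / (2 * t - 1)) * A ^ (1 / 2 - t) := by
        rw [sqrt_rpow_eq (by linarith)]; ring_nf

lemma le_tsum_lattice {A y t : ℝ} (hA : 1 ≤ A) (ht : 0 ≤ t) (hy : |y| ≤ π)
    (hsum : Summable (fun n : ℤ => (A + (y + 2 * π * n) ^ 2) ^ (-t))) :
    (2 * π * (1 + (1 + π) ^ 2) ^ t)⁻¹ * A ^ (1 / 2 - t) ≤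
      ∑' n : ℤ, (A + (y + 2 * π * n) ^ 2) ^ (-t) := by
  set B : ℝ := 1 + (1 + π) ^ 2
  set s := √A
  have hA0 : 0 < A := by linarith
  have hs : 1 ≤ s := one_le_sqrt.mpr hA
  set K := ⌊s / (2 * π)⌋₊
  have hK : s / (2 * π) ≤ K + 1 := (Nat.lt_floor_add_one _).le
  have hterm : ∀ k ∈ Finset.range (K + 1), (B * A) ^ (-t) ≤ (A + (y + 2 * π * k) ^ 2) ^ (-t) := by
    intro k hk
    have hk : 2 * π * k ≤ s := by
      have : (k : ℝ) ≤ K := by exact_mod_cast Nat.lt_succ_iff.mp (Finset.mem_range.mp hk)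
      have := (Nat.floor_le (by positivity : 0 ≤ s / (2 * π))).trans' this
      rwa [le_div_iff₀' (by positivity)] at this
    have hy' : |y + 2 * π * k| ≤ (1 + π) * s := by
      calc |y + 2 * π * k| ≤ |y| + |2 * π * k| := abs_add_le _ _
        _ ≤ π + s := by rw [abs_of_nonneg (a := 2 * π * k) (by positivity)]; linarith
        _ ≤ (1 + π) * s := by nlinarith [pi_pos]
    have hsq : (y + 2 * π * k) ^ 2 ≤ (1 + π) ^ 2 * A := by
      rw [← sq_sqrt hA0.le, ← mul_pow]; exact sq_le_sq' (abs_le.mp hy').1 (abs_le.mp hy').2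
    exact rpow_le_rpow_of_nonpos (by positivity) (by linear_combination hsq) (by linarith)
  calc (2 * π * B ^ t)⁻¹ * A ^ (1 / 2 - t) = s / (2 * π) * (B * A) ^ (-t) := by
        rw [mul_rpow (by positivity) hA0.le, show s = A ^ (1 / 2 : ℝ) from sqrt_eq_rpow A,
          rpow_neg (by positivity), rpow_neg hA0.le, rpow_sub hA0]
        field_simp
    _ ≤ (K + 1) * (B * A) ^ (-t) := by gcongr
    _ ≤ ∑ k ∈ Finset.range (K + 1), (A + (y + 2 * π * k) ^ 2) ^ (-t) := by
        simpa using Finset.card_nsmul_le_sum _ _ _ hterm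
    _ = ∑ n ∈ (Finset.range (K + 1)).map (Nat.castEmbedding : ℕ ↪ ℤ),
          (A + (y + 2 * π * n) ^ 2) ^ (-t) := by
        simp
    _ ≤ ∑' n : ℤ, (A + (y + 2 * π * n) ^ 2) ^ (-t) :=
        hsum.sum_le_tsum _ (fun n _ => by positivity)

noncomputable def intEquivPreimageExp {l w : ℂ} (hl : l ≠ 0) (hw : w ≠ 0) :
    ℤ ≃ {z : ℂ // l * Complex.exp z = w} :=
  Equiv.ofBijective
    (fun n => ⟨Complex.log (w / l) + n * (2 * π * Complex.I), by
      rw [Complex.exp_add, Complex.exp_log (div_ne_zero hw hl), Complex.exp_int_mul_two_pi_mul_I]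
      field_simp⟩)
    ⟨fun m n h => by
      have h' := congrArg Subtype.val h
      simpa [Complex.two_pi_I_ne_zero] using h',
     fun ⟨z, hz⟩ => by
      obtain ⟨n, hn⟩ := Complex.exp_eq_exp_iff_exists_int.mp
        (show Complex.exp z = Complex.exp (Complex.log (w / l)) by
          rw [Complex.exp_log (div_ne_zero hw hl), eq_div_iff hl, mul_comm, hz])
      exact ⟨n, Subtype.ext hn.symm⟩⟩

lemma coe_intEquivPreimageExp {l w : ℂ} (hl : l ≠ 0) (hw : w ≠ 0) (n : ℤ) :
    (intEquivPreimageExp hl hw n : ℂ) = Complex.log (w / l) + n * (2 * π * Complex.I) :=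
  rfl

lemma norm_log_add_int_mul_two_pi_I_sq (u : ℂ) (n : ℤ) :
    ‖Complex.log u + n * (2 * π * Complex.I)‖ ^ 2 =
      log ‖u‖ ^ 2 + (Complex.arg u + 2 * π * n) ^ 2 := by
  rw [Complex.sq_norm, Complex.normSq_apply]
  simp only [Complex.add_re, Complex.add_im, Complex.log_re, Complex.log_im, Complex.mul_re,
    Complex.mul_im, Complex.intCast_re, Complex.intCast_im, Complex.re_ofNat, Complex.im_ofNat,
    Complex.ofReal_re, Complex.ofReal_im, Complex.I_re, Complex.I_im]
  ring

lemma tsum_preimage_exp_eq {l w : ℂ} (hl : l ≠ 0) (hw : w ≠ 0) (t : ℝ) :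
    ∑' z : {z : ℂ // l * Complex.exp z = w}, (1 + ‖z.1‖ ^ 2) ^ (-t) =
      ∑' n : ℤ, ((1 + log ‖w / l‖ ^ 2) + (Complex.arg (w / l) + 2 * π * n) ^ 2) ^ (-t) := by
  rw [← (intEquivPreimageExp hl hw).tsum_eq]
  congr! 2 with n
  rw [coe_intEquivPreimageExp, norm_log_add_int_mul_two_pi_I_sq, add_assoc]

/-- `L_t 1 (w)` for the spherical transfer operator of `f(z) = l e^z`. -/
noncomputable def sphericalTransferOne (l : ℂ) (t : ℝ) (w : ℂ) : ℝ :=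
  ((1 + ‖w‖ ^ 2) / ‖w‖) ^ t * ∑' z : {z : ℂ // l * Complex.exp z = w}, (1 + ‖z.1‖ ^ 2) ^ (-t)

lemma rpow_le_one_add_sq_div_self_rpow_le {r t : ℝ} (hr : 1 ≤ r) (ht : 0 ≤ t) :
    r ^ t ≤ ((1 + r ^ 2) / r) ^ t ∧ ((1 + r ^ 2) / r) ^ t ≤ 2 ^ t * r ^ t := by
  have hr0 : 0 < r := by linarith
  rw [← mul_rpow zero_le_two hr0.le]
  constructor <;> gcongr
  · rw [le_div_iff₀ hr0]; nlinarith
  · rw [div_le_iff₀ hr0]; nlinarith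

lemma sphericalTransferOne_bounds {l : ℂ} (hl : l ≠ 0) {t : ℝ} (ht : 1 / 2 < t) :
    ∃ C > 0, ∀ w : ℂ, 1 ≤ ‖w‖ →
      C⁻¹ * (‖w‖ ^ t * (1 + log ‖w / l‖ ^ 2) ^ (1 / 2 - t)) ≤ sphericalTransferOne l t w ∧
      sphericalTransferOne l t w ≤ C * (‖w‖ ^ t * (1 + log ‖w / l‖ ^ 2) ^ (1 / 2 - t)) := by
  have ht0 : 0 ≤ t := by linarith
  set c := (2 * π * (1 + (1 + π) ^ 2) ^ t)⁻¹
  set C := 2 ^ (t + 1) * (1 + 1 / (2 * t - 1))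
  have hC : 0 < C := by
    have : 0 < 2 * t - 1 := by linarith
    positivity
  refine ⟨max c⁻¹ (2 ^ t * C), by positivity, fun w hw => ?_⟩
  have hw0 : w ≠ 0 := norm_pos_iff.mp (by linarith)
  have hA : 1 ≤ 1 + log ‖w / l‖ ^ 2 := le_add_of_nonneg_right (sq_nonneg _)
  have hy := Complex.abs_arg_le_pi (w / l)
  obtain ⟨hsum, hle⟩ := summable_and_tsum_lattice_le hA ht hy
  have hge := le_tsum_lattice hA ht0 hy hsum
  obtain ⟨hF_ge, hF_le⟩ := rpow_le_one_add_sq_div_self_rpow_le hw ht0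
  rw [sphericalTransferOne, tsum_preimage_exp_eq hl hw0]
  constructor
  · calc (max c⁻¹ (2 ^ t * C))⁻¹ * (‖w‖ ^ t * (1 + log ‖w / l‖ ^ 2) ^ (1 / 2 - t))
          ≤ c * (‖w‖ ^ t * (1 + log ‖w / l‖ ^ 2) ^ (1 / 2 - t)) := by
          gcongr
          exact inv_le_of_inv_le₀ (by positivity) (le_max_left _ _)
      _ = ‖w‖ ^ t * (c * (1 + log ‖w / l‖ ^ 2) ^ (1 / 2 - t)) := by ring
      _ ≤ _ := mul_le_mul hF_ge hge (by positivity) (by positivity)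
  · calc _ ≤ (2 ^ t * ‖w‖ ^ t) * (C * (1 + log ‖w / l‖ ^ 2) ^ (1 / 2 - t)) :=
          mul_le_mul hF_le hle (tsum_nonneg fun n => by positivity) (by positivity)
      _ = (2 ^ t * C) * (‖w‖ ^ t * (1 + log ‖w / l‖ ^ 2) ^ (1 / 2 - t)) := by ring
      _ ≤ _ := by gcongr; exact le_max_right _ _

lemma tendsto_rpow_mul_one_add_log_sq_rpow {c t : ℝ} (hc : 0 < c) (ht : 1 / 2 ≤ t) :
    Tendsto (fun r : ℝ => r ^ t * (1 + log (r / c) ^ 2) ^ (1 / 2 - t)) atTop atTop := by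
  have hlog : ∀ᶠ r in atTop, 1 + log (r / c) ^ 2 ≤ r := by
    have h := (isLittleO_pow_log_id_atTop (n := 2)).comp_tendsto (tendsto_id.atTop_div_const hc)
    filter_upwards [h.bound (by positivity : 0 < c / 2), eventually_ge_atTop 2] with r hr hr2
    simp only [Function.comp_apply, id_eq, norm_pow, Real.norm_eq_abs, sq_abs] at hr
    rw [abs_of_nonneg (by positivity)] at hr
    calc 1 + log (r / c) ^ 2 ≤ 1 + c / 2 * (r / c) := by gcongr
      _ ≤ r := by field_simp; linarith
  refine tendsto_atTop_mono' _ ?_ (tendsto_rpow_atTop (by norm_num : (0 : ℝ) < 1 / 2))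
  filter_upwards [hlog, eventually_gt_atTop 0] with r hr hr0
  calc r ^ (1 / 2 : ℝ) = r ^ t * r ^ (1 / 2 - t) := by rw [← rpow_add hr0]; ring_nf
    _ ≤ r ^ t * (1 + log (r / c) ^ 2) ^ (1 / 2 - t) :=
        mul_le_mul_of_nonneg_left
          (rpow_le_rpow_of_nonpos (by positivity) hr (by linarith)) (by positivity)

lemma tendsto_norm_rpow_mul_one_add_log_sq_rpow {l : ℂ} (hl : l ≠ 0) {t : ℝ} (ht : 1 / 2 ≤ t) :
    Tendsto (fun w : ℂ => ‖w‖ ^ t * (1 + log ‖w / l‖ ^ 2) ^ (1 / 2 - t)) (Bornology.cobounded ℂ)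
      atTop := by
  simp only [norm_div]
  exact (tendsto_rpow_mul_one_add_log_sq_rpow (norm_pos_iff.mpr hl) ht).comp
    tendsto_norm_cobounded_atTop

/-- For `f(z) = λ·e^z`, `λ ≠ 0`, and `t > 1/2`, the spherical transfer operator
applied to the constant function `1`, namely
`L_t 1(w) = ((1+|w|²)/|w|)^t · ∑_{f(z)=w} (1+|z|²)^{-t}`, tends to `+∞` as `|w| → ∞`
(so `L_t` is not a bounded operator), and more precisely for large `|w|` one has
`L_t 1(w) ≍ |w|^t · (1 + (log|w/λ|)²)^{1/2 - t}`. -/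
theorem stmt2 (l : ℂ) (hl : l ≠ 0) (t : ℝ) (ht : (1 / 2 : ℝ) < t) :
    Tendsto
      (fun w : ℂ => ((1 + ‖w‖ ^ 2) / ‖w‖) ^ t *
        ∑' z : {z : ℂ // l * Complex.exp z = w}, (1 + ‖z.1‖ ^ 2) ^ (-t))
      (comap (fun w : ℂ => ‖w‖) atTop) atTop ∧
    ¬ BddAbove (Set.range (fun w : ℂ => ((1 + ‖w‖ ^ 2) / ‖w‖) ^ t *
        ∑' z : {z : ℂ // l * Complex.exp z = w}, (1 + ‖z.1‖ ^ 2) ^ (-t))) ∧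
    ∃ C > 0, ∃ R : ℝ, ∀ w : ℂ, R ≤ ‖w‖ →
      C⁻¹ * (‖w‖ ^ t * (1 + Real.log (‖w / l‖) ^ 2) ^ (1 / 2 - t)) ≤
        ((1 + ‖w‖ ^ 2) / ‖w‖) ^ t *
          ∑' z : {z : ℂ // l * Complex.exp z = w}, (1 + ‖z.1‖ ^ 2) ^ (-t) ∧
      ((1 + ‖w‖ ^ 2) / ‖w‖) ^ t *
          ∑' z : {z : ℂ // l * Complex.exp z = w}, (1 + ‖z.1‖ ^ 2) ^ (-t) ≤
        C * (‖w‖ ^ t * (1 + Real.log (‖w / l‖) ^ 2) ^ (1 / 2 - t)) := by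
  obtain ⟨C, hC, hbounds⟩ := sphericalTransferOne_bounds hl ht
  have htend : Tendsto (sphericalTransferOne l t) (Bornology.cobounded ℂ) atTop :=
    tendsto_atTop_mono' _ (tendsto_norm_cobounded_atTop.eventually_ge_atTop 1 |>.mono
        fun w hw => (hbounds w hw).1)
      ((tendsto_norm_rpow_mul_one_add_log_sq_rpow hl ht.le).const_mul_atTop (inv_pos.mpr hC))
  exact ⟨by rwa [comap_norm_atTop], not_bddAbove_of_tendsto_atTop htend, C, hC, 1, hbounds⟩
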